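/- arXiv:1201.5152 — 2 statements merged into one kernel-verified Lean document; each statement's English description precedes it below -/
import Mathlib

section
/- For α > 0, the operator G_ε(h)(u,τ) = ∫_{-∞}^0 h(u+t, τ + t/ε) dt, applied to a continuous function h : {Re u < -ρ} × 𝕋 → ℂ satisfying |h(u,τ)| ≤ C e^{α Re u}, is well defined, satisfies |G_ε(h)(u,τ)| ≤ (C/α) e^{α Re u}, and is a right inverse of L_ε = ε⁻¹∂_τ + ∂_u, i.e., L_ε(G_ε(h)) = h whenever h is C¹. -/
/-!
Along the characteristic line `s ↦ (u + s, τ + s/ε)` of `L_ε`, the function `G_ε h` is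
`s ↦ ∫_{-∞}^s h(u + t, τ + t/ε) dt`, so `L_ε (G_ε h)`, the derivative of `G_ε h` in the
direction `(1, ε⁻¹)`, is `h(u, τ)` by the fundamental theorem of calculus. The exponential
bound on `h` dominates the integrand by `C e^{α Re u} e^{α t}`, whose integral over
`(-∞, 0]` is `C e^{α Re u} / α`.
-/

open MeasureTheory Set Real

section IntegralIic

variable {E : Type*} [NormedAddCommGroup E]

theorem integrableOn_Iic_of_norm_le_mul_exp {f : ℝ → E} {α K a : ℝ}
    (hf : AEStronglyMeasurable f (volume.restrict (Iic a)))
    (hα : 0 < α) (hbound : ∀ t ≤ a, ‖f t‖ ≤ K * exp (α * t)) : IntegrableOn f (Iic a) :=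
  ((integrableOn_exp_mul_Iic hα a).const_mul K).mono' hf <| by
    filter_upwards [ae_restrict_mem measurableSet_Iic] with t ht using hbound t ht

variable [NormedSpace ℝ E]

theorem norm_setIntegral_Iic_le_of_norm_le_mul_exp {f : ℝ → E} {α K a : ℝ} (hα : 0 < α)
    (hbound : ∀ t ≤ a, ‖f t‖ ≤ K * exp (α * t)) :
    ‖∫ t in Iic a, f t‖ ≤ K * exp (α * a) / α := by
  have hle : ‖∫ t in Iic a, f t‖ ≤ ∫ t in Iic a, K * exp (α * t) :=
    norm_integral_le_of_norm_le ((integrableOn_exp_mul_Iic hα a).const_mul K) <| by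
      filter_upwards [ae_restrict_mem measurableSet_Iic] with t ht using hbound t ht
  rwa [integral_const_mul, integral_exp_mul_Iic hα, ← mul_div_assoc] at hle

theorem setIntegral_Iic_comp_add_right (f : ℝ → E) (a s : ℝ) :
    ∫ t in Iic a, f (t + s) = ∫ t in Iic (a + s), f t := by
  have hpre : (fun t : ℝ => t + s) ⁻¹' Iic (a + s) = Iic a := by
    ext t; simp
  rw [← hpre]
  exact (measurePreserving_add_right volume s).setIntegral_preimage_emb
    (measurableEmbedding_addRight s) f _

theorem hasDerivAt_setIntegral_Iic [CompleteSpace E] {f : ℝ → E} {x b : ℝ} (hf : ContinuousAt f x)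
    (hxb : x < b) (hint : IntegrableOn f (Iic b)) :
    HasDerivAt (fun s => ∫ t in Iic s, f t) (f x) x := by
  have hint_Iio : IntegrableOn f (Iio b) := hint.mono_set Iio_subset_Iic_self
  have hsplit : (fun s => (∫ t in Iic x, f t) + ∫ t in x..s, f t)
      =ᶠ[nhds x] fun s => ∫ t in Iic s, f t := by
    filter_upwards [Iio_mem_nhds hxb] with s hs
    rw [← intervalIntegral.integral_Iic_sub_Iic (hint.mono_set (Iic_subset_Iic.2 hxb.le))
      (hint.mono_set (Iic_subset_Iic.2 (le_of_lt hs))), add_sub_cancel]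
  refine HasDerivAt.congr_of_eventuallyEq ?_ hsplit.symm
  refine (intervalIntegral.integral_hasDerivAt_right IntervalIntegrable.refl ?_ hf).const_add _
  exact ⟨Iio b, Iio_mem_nhds hxb, hint_Iio.aestronglyMeasurable⟩

end IntegralIic

theorem HasFDerivAt.apply_eq_of_hasDerivAt_line {E F : Type*} [NormedAddCommGroup E]
    [NormedSpace ℝ E] [NormedAddCommGroup F] [NormedSpace ℝ F] {g : E → F} {D : E →L[ℝ] F}
    {x v : E} {c : F} (hg : HasFDerivAt g D x)
    (hline : HasDerivAt (fun s : ℝ => g (x + s • v)) c 0) : D v = c := by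
  have hx : HasFDerivAt g D (x + (0 : ℝ) • v) := by rwa [zero_smul, add_zero]
  have hdir : HasDerivAt (fun s : ℝ => x + s • v) v 0 := by
    simpa using ((hasDerivAt_id (0 : ℝ)).smul_const v).const_add x
  exact (hx.comp_hasDerivAt 0 hdir).unique hline

theorem right_inverse_G_eps_general
    (α ρ C ε : ℝ) (hα : 0 < α)
    (h : ℂ → ℝ → ℂ)
    (hC1 : ContDiff ℝ 1 (fun p : ℂ × ℝ => h p.1 p.2))
    (hbound : ∀ (u : ℂ) (τ : ℝ), u.re < -ρ → ‖h u τ‖ ≤ C * Real.exp (α * u.re))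
    (G : ℂ → ℝ → ℂ)
    (hG : ∀ (u : ℂ) (τ : ℝ), G u τ = ∫ t in Set.Iic (0 : ℝ), h (u + (t : ℂ)) (τ + t / ε)) :
    ∀ (u : ℂ) (τ : ℝ), u.re < -ρ →
      IntegrableOn (fun t : ℝ => h (u + (t : ℂ)) (τ + t / ε)) (Set.Iic 0) ∧
      ‖G u τ‖ ≤ C / α * Real.exp (α * u.re) ∧
      ∀ D : ℂ × ℝ →L[ℝ] ℂ,
        HasFDerivAt (fun p : ℂ × ℝ => G p.1 p.2) D (u, τ) →
        D (1, ε⁻¹) = h u τ := by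
  intro u τ hu
  set line : ℝ → ℂ := fun t => h (u + t) (τ + t / ε)
  have hline_cont : Continuous line := hC1.continuous.comp <|
    (continuous_const.add Complex.continuous_ofReal).prodMk
      (continuous_const.add (continuous_id.div_const ε))
  have hline_le : ∀ {s : ℝ}, u.re + s < -ρ →
      ∀ t ≤ s, ‖line t‖ ≤ C * exp (α * u.re) * exp (α * t) := fun hs t ht => by
    have hre : (u + t).re < -ρ := by simp only [Complex.add_re, Complex.ofReal_re]; linarith
    simpa only [Complex.add_re, Complex.ofReal_re, mul_add, exp_add, mul_assoc]
      using hbound _ (τ + t / ε) hre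
  have hline_int : ∀ {s : ℝ}, u.re + s < -ρ → IntegrableOn line (Iic s) := fun hs =>
    integrableOn_Iic_of_norm_le_mul_exp hline_cont.aestronglyMeasurable hα (hline_le hs)
  refine ⟨hline_int (by simpa using hu), ?_, fun D hD => ?_⟩
  · rw [hG]
    calc _ ≤ C * exp (α * u.re) * exp (α * 0) / α :=
          norm_setIntegral_Iic_le_of_norm_le_mul_exp hα (hline_le (by simpa using hu))
      _ = C / α * exp (α * u.re) := by rw [mul_zero, exp_zero]; ring
  · have hG_line (s : ℝ) : G (u + s) (τ + s * ε⁻¹) = ∫ t in Iic s, line t := by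
      rw [hG, ← zero_add s, ← setIntegral_Iic_comp_add_right, zero_add]
      congr 1 with t
      simp only [line, Complex.ofReal_add, div_eq_mul_inv]
      ring_nf
    obtain ⟨b, hb0, hb⟩ := exists_between (sub_pos.2 hu)
    have hderiv : HasDerivAt (fun s : ℝ => G (u + s) (τ + s * ε⁻¹)) (h u τ) 0 := by
      simpa [hG_line, line] using
        hasDerivAt_setIntegral_Iic hline_cont.continuousAt hb0 (hline_int (by linarith))
    exact hD.apply_eq_of_hasDerivAt_line (by simpa using hderiv)

/-- For `α > 0`, the operator `G_ε(h)(u,τ) = ∫_{-∞}^0 h(u+t, τ+t/ε) dt` applied to a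
continuous `2π`-periodic (in `τ`) function bounded by `C e^{α Re u}` on `{Re u < -ρ}`
is well defined, satisfies `|G_ε(h)| ≤ (C/α) e^{α Re u}`, and is a right inverse of
`L_ε = ε⁻¹ ∂_τ + ∂_u`. -/
theorem right_inverse_G_eps
    (α ρ C ε : ℝ) (hα : 0 < α) (hε : 0 < ε)
    (h : ℂ → ℝ → ℂ)
    (hC1 : ContDiff ℝ 1 (fun p : ℂ × ℝ => h p.1 p.2))
    (hper : ∀ (u : ℂ) (τ : ℝ), h u (τ + 2 * Real.pi) = h u τ)
    (hbound : ∀ (u : ℂ) (τ : ℝ), u.re < -ρ → ‖h u τ‖ ≤ C * Real.exp (α * u.re))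
    (G : ℂ → ℝ → ℂ)
    (hG : ∀ (u : ℂ) (τ : ℝ), G u τ = ∫ t in Set.Iic (0 : ℝ), h (u + (t : ℂ)) (τ + t / ε)) :
    ∀ (u : ℂ) (τ : ℝ), u.re < -ρ →
      IntegrableOn (fun t : ℝ => h (u + (t : ℂ)) (τ + t / ε)) (Set.Iic 0) ∧
      ‖G u τ‖ ≤ C / α * Real.exp (α * u.re) ∧
      ∀ D : ℂ × ℝ →L[ℝ] ℂ,
        HasFDerivAt (fun p : ℂ × ℝ => G p.1 p.2) D (u, τ) →
        D (1, ε⁻¹) = h u τ :=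
  right_inverse_G_eps_general α ρ C ε hα h hC1 hbound G hG
end

section
/- With G₀ as above, if w ∈ S_σ × S_σ (finite Fourier norm) then ‖G₀(w)‖_{1,σ} ≤ (K/ε)‖w‖_{1,σ} for a constant K depending only on λ; and if additionally the mean of w vanishes (w^{[0]} = 0), then ‖G₀(w)‖_{1,σ} ≤ K‖w‖_{1,σ} with K independent of ε. -/
/-!
`G₀` acts diagonally on Fourier modes: on mode `k` it is multiplication by the matrix
`-(k² + λ²ε²)⁻¹ [[ik, ε], [ελ², ik]]`, whose norm for `|a| + |b|` is at most
`(|k| + ε(1 + λ²)) / (k² + λ²ε²)`. For `k ≠ 0` this is at most `2 + λ²` since `|k| ≤ k²`;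
only the mean mode `k = 0` gives the large factor `(1 + λ²) / (λ²ε)`. The weighted `ℓ¹` norms
are then compared term by term.
-/

open Complex

theorem summable_and_tsum_le_mul_tsum {ι : Type*} {f g : ι → ℝ} {C : ℝ}
    (hf : ∀ i, 0 ≤ f i) (hfg : ∀ i, f i ≤ C * g i) (hg : Summable g) :
    Summable f ∧ ∑' i, f i ≤ C * ∑' i, g i := by
  have hCg : Summable fun i => C * g i := hg.mul_left C
  have hsum : Summable f := .of_nonneg_of_le hf hfg hCg
  exact ⟨hsum, (hsum.tsum_le_tsum hfg hCg).trans_eq tsum_mul_left⟩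

theorem Prod.norm_fst_add_norm_snd_smul {𝕜 E F : Type*} [NormedField 𝕜]
    [SeminormedAddCommGroup E] [SeminormedAddCommGroup F] [NormedSpace 𝕜 E] [NormedSpace 𝕜 F]
    (c : 𝕜) (p : E × F) : ‖(c • p).1‖ + ‖(c • p).2‖ = ‖c‖ * (‖p.1‖ + ‖p.2‖) := by
  simp only [Prod.smul_fst, Prod.smul_snd, norm_smul, mul_add]

namespace G0

variable {lam ε : ℝ}

theorem norm_neg_inv_symbol (k : ℤ) (hlam : lam ≠ 0) (hε : 0 < ε) :
    ‖-(((k : ℂ) ^ 2 + (lam : ℂ) ^ 2 * (ε : ℂ) ^ 2)⁻¹)‖ = ((k : ℝ) ^ 2 + lam ^ 2 * ε ^ 2)⁻¹ := by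
  have hD : 0 < (k : ℝ) ^ 2 + lam ^ 2 * ε ^ 2 := by positivity
  have hcast : (k : ℂ) ^ 2 + (lam : ℂ) ^ 2 * (ε : ℂ) ^ 2
      = (((k : ℝ) ^ 2 + lam ^ 2 * ε ^ 2 : ℝ) : ℂ) := by
    push_cast; rfl
  rw [norm_neg, norm_inv, hcast, norm_real, Real.norm_of_nonneg hD.le]

theorem norm_numerator_le (k : ℤ) (hε : 0 ≤ ε) (a b : ℂ) :
    ‖I * k * a + ε * b‖ + ‖ε * lam ^ 2 * a + I * k * b‖
      ≤ (|(k : ℝ)| + ε * (1 + lam ^ 2)) * (‖a‖ + ‖b‖) := by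
  have h₁ : ‖I * k * a + ε * b‖ ≤ |(k : ℝ)| * ‖a‖ + ε * ‖b‖ := by
    refine (norm_add_le _ _).trans_eq ?_
    simp [norm_intCast, norm_real, abs_of_nonneg hε]
  have h₂ : ‖ε * lam ^ 2 * a + I * k * b‖ ≤ ε * lam ^ 2 * ‖a‖ + |(k : ℝ)| * ‖b‖ := by
    refine (norm_add_le _ _).trans_eq ?_
    simp [norm_intCast, norm_real, abs_of_nonneg hε]
  have ha := norm_nonneg a
  have hb := norm_nonneg b
  nlinarith [mul_nonneg hε ha, mul_nonneg hε hb, mul_nonneg (mul_nonneg hε (sq_nonneg lam)) hb]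

noncomputable def modeGain (lam ε : ℝ) (k : ℤ) : ℝ :=
  (|(k : ℝ)| + ε * (1 + lam ^ 2)) / ((k : ℝ) ^ 2 + lam ^ 2 * ε ^ 2)

theorem norm_mode_le (k : ℤ) (hlam : lam ≠ 0) (hε : 0 < ε) (a b : ℂ) :
    ‖(-(((k : ℂ) ^ 2 + (lam : ℂ) ^ 2 * (ε : ℂ) ^ 2)⁻¹) •
        (I * k * a + ε * b, ε * lam ^ 2 * a + I * k * b)).1‖ +
      ‖(-(((k : ℂ) ^ 2 + (lam : ℂ) ^ 2 * (ε : ℂ) ^ 2)⁻¹) •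
        (I * k * a + ε * b, ε * lam ^ 2 * a + I * k * b)).2‖
      ≤ modeGain lam ε k * (‖a‖ + ‖b‖) := by
  rw [Prod.norm_fst_add_norm_snd_smul, norm_neg_inv_symbol k hlam hε, modeGain, div_eq_inv_mul,
    mul_assoc _⁻¹]
  have hD : 0 < (k : ℝ) ^ 2 + lam ^ 2 * ε ^ 2 := by positivity
  exact mul_le_mul_of_nonneg_left (norm_numerator_le k hε.le a b) (inv_nonneg.mpr hD.le)

theorem modeGain_le_of_ne_zero {k : ℤ} (hk : k ≠ 0) (hε₁ : ε ≤ 1) :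
    modeGain lam ε k ≤ 2 + lam ^ 2 := by
  have hk₁ : 1 ≤ |(k : ℝ)| := by rw [← Int.cast_abs]; exact_mod_cast Int.one_le_abs hk
  have hk₂ : |(k : ℝ)| ≤ (k : ℝ) ^ 2 := by rw [← sq_abs (k : ℝ)]; nlinarith
  rw [modeGain, div_le_iff₀ (by positivity)]
  nlinarith [mul_nonneg (sq_nonneg lam) (sq_nonneg ε),
    mul_le_mul_of_nonneg_right hε₁ (sq_nonneg lam)]

theorem modeGain_zero (hlam : lam ≠ 0) (hε : 0 < ε) :
    modeGain lam ε 0 = (1 + lam ^ 2) / lam ^ 2 / ε := by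
  rw [modeGain]
  field_simp
  simp only [Int.cast_zero, abs_zero]
  ring

theorem modeGain_le_div (k : ℤ) (hlam : lam ≠ 0) (hε₀ : 0 < ε) (hε₁ : ε ≤ 1) :
    modeGain lam ε k ≤ (2 + lam ^ 2 + (1 + lam ^ 2) / lam ^ 2) / ε := by
  rcases eq_or_ne k 0 with rfl | hk
  · rw [modeGain_zero hlam hε₀]
    gcongr
    exact le_add_of_nonneg_left (by positivity)
  · calc modeGain lam ε k ≤ 2 + lam ^ 2 + (1 + lam ^ 2) / lam ^ 2 :=
          (modeGain_le_of_ne_zero hk hε₁).trans (le_add_of_nonneg_right (by positivity))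
      _ ≤ _ := le_div_self (by positivity) hε₀ hε₁

end G0

open G0 in
/-- Bounds for the operator `G₀` in the Fourier norm
`‖w‖_{1,σ} = Σ_k (|w₁^{[k]}| + |w₂^{[k]}|) e^{|k|σ}`: there is a constant `K` depending
only on `λ` such that `‖G₀(w)‖_{1,σ} ≤ (K/ε) ‖w‖_{1,σ}`, and `‖G₀(w)‖_{1,σ} ≤ K ‖w‖_{1,σ}`
when the mean of `w` vanishes. (`ε` ranges in `(0,1]`, as in the paper.) -/
theorem G0_bounds (lam : ℝ) (hlam : lam ≠ 0) :
    ∃ K : ℝ, 0 < K ∧ ∀ ε : ℝ, 0 < ε → ε ≤ 1 → ∀ σ : ℝ, 0 ≤ σ →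
      ∀ w z : ℤ → ℂ × ℂ,
      (∀ k : ℤ, z k =
        (-(((k : ℂ) ^ 2 + (lam : ℂ) ^ 2 * (ε : ℂ) ^ 2)⁻¹)) •
          (Complex.I * (k : ℂ) * (w k).1 + (ε : ℂ) * (w k).2,
           (ε : ℂ) * (lam : ℂ) ^ 2 * (w k).1 + Complex.I * (k : ℂ) * (w k).2)) →
      (Summable fun k : ℤ =>
        (‖(w k).1‖ + ‖(w k).2‖) * Real.exp ((|k| : ℝ) * σ)) →
      (Summable fun k : ℤ =>
        (‖(z k).1‖ + ‖(z k).2‖) * Real.exp ((|k| : ℝ) * σ)) ∧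
      (∑' k : ℤ, (‖(z k).1‖ + ‖(z k).2‖) * Real.exp ((|k| : ℝ) * σ))
        ≤ K / ε *
          ∑' k : ℤ, (‖(w k).1‖ + ‖(w k).2‖) * Real.exp ((|k| : ℝ) * σ) ∧
      (w 0 = 0 →
        (∑' k : ℤ, (‖(z k).1‖ + ‖(z k).2‖) * Real.exp ((|k| : ℝ) * σ))
          ≤ K *
            ∑' k : ℤ, (‖(w k).1‖ + ‖(w k).2‖) *
              Real.exp ((|k| : ℝ) * σ)) := by
  set K := 2 + lam ^ 2 + (1 + lam ^ 2) / lam ^ 2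
  have hK : 2 + lam ^ 2 ≤ K := le_add_of_nonneg_right (by positivity)
  refine ⟨K, by positivity, fun ε hε₀ hε₁ σ _ w z hz hw => ?_⟩
  have hmode : ∀ k : ℤ, (‖(z k).1‖ + ‖(z k).2‖) * Real.exp ((|k| : ℝ) * σ)
      ≤ modeGain lam ε k * ((‖(w k).1‖ + ‖(w k).2‖) * Real.exp ((|k| : ℝ) * σ)) := fun k => by
    rw [hz k, ← mul_assoc]
    exact mul_le_mul_of_nonneg_right (norm_mode_le k hlam hε₀ _ _) (Real.exp_pos _).le
  obtain ⟨hsum, hle⟩ := summable_and_tsum_le_mul_tsum (fun k => by positivity)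
    (fun k => (hmode k).trans (mul_le_mul_of_nonneg_right (modeGain_le_div k hlam hε₀ hε₁)
      (by positivity))) hw
  refine ⟨hsum, hle, fun hw₀ => (summable_and_tsum_le_mul_tsum (fun k => by positivity)
    (fun k => ?_) hw).2⟩
  rcases eq_or_ne k 0 with rfl | hk
  · simpa [hw₀] using hmode 0
  · exact (hmode k).trans (mul_le_mul_of_nonneg_right ((modeGain_le_of_ne_zero hk hε₁).trans hK)
      (by positivity))
end
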